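/- A diagonalizable operator on a complex Hilbert space (of dimension greater than 1) is not weakly l-sequentially supercyclic. -/

import Mathlib

open Filter Topology

variable {H : Type*} [NormedAddCommGroup H] [InnerProductSpace ℂ H]

/-- The projective orbit of `y` under `T`. -/
def projOrbit (T : H →L[ℂ] H) (y : H) : Set H :=
  {z | ∃ (α : ℂ) (n : ℕ), z = α • (T ^ n) y}

/-- Weak convergence of a sequence. -/
def WeaklyConvSeq (u : ℕ → H) (x : H) : Prop :=
  ∀ f : StrongDual ℂ H, Tendsto (fun k => f (u k)) atTop (nhds (f x))

/-- The weak limit set of a set. -/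
def weakLimitSet (A : Set H) : Set H :=
  {x | ∃ u : ℕ → H, (∀ n, u n ∈ A) ∧ WeaklyConvSeq u x}

/-- `T` is diagonalizable: there is a Hilbert basis of eigenvectors of `T`
(equivalently, `T` is unitarily equivalent to a diagonal operator). -/
def Diagonalizable (T : H →L[ℂ] H) : Prop :=
  ∃ (ι : Type) (b : HilbertBasis ι ℂ H) (d : ι → ℂ), ∀ i, T (b i) = d i • b i

/-- No point escapes the closure of a geometric range in `ℂ` ... rather, some point does. -/
lemma exists_not_mem_closure_geom (c μ : ℂ) :
    ∃ w : ℂ, w ∉ closure (Set.range fun n : ℕ => c * μ ^ n) := by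
  have key : ∃ (w : ℂ) (ε : ℝ), 0 < ε ∧ ∀ n : ℕ, ε ≤ dist w (c * μ ^ n) := by
    by_cases hc : c = 0
    · exact ⟨1, 1, one_pos, fun n => by simp [hc]⟩
    · have hc' : 0 < ‖c‖ := norm_pos_iff.2 hc
      by_cases hμ : ‖μ‖ ≤ 1
      · refine ⟨((2 * ‖c‖ : ℝ) : ℂ), ‖c‖, hc', fun n => ?_⟩
        have h1 : ‖c * μ ^ n‖ ≤ ‖c‖ := by
          rw [norm_mul, norm_pow]
          calc ‖c‖ * ‖μ‖ ^ n ≤ ‖c‖ * 1 := by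
                gcongr
                exact pow_le_one₀ (norm_nonneg μ) hμ
            _ = ‖c‖ := mul_one _
        have h2 : ‖((2 * ‖c‖ : ℝ) : ℂ)‖ = 2 * ‖c‖ := by
          rw [Complex.norm_real]
          exact abs_of_nonneg (by positivity)
        rw [dist_eq_norm]
        calc ‖c‖ = 2 * ‖c‖ - ‖c‖ := by ring
          _ ≤ ‖((2 * ‖c‖ : ℝ) : ℂ)‖ - ‖c * μ ^ n‖ := by rw [h2]; linarith
          _ ≤ ‖((2 * ‖c‖ : ℝ) : ℂ) - c * μ ^ n‖ := norm_sub_norm_le _ _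
      · push_neg at hμ
        have hε : 0 < ‖c‖ * (‖μ‖ - 1) / 2 := by
          have : 0 < ‖μ‖ - 1 := by linarith
          positivity
        refine ⟨((‖c‖ * (1 + ‖μ‖) / 2 : ℝ) : ℂ), ‖c‖ * (‖μ‖ - 1) / 2, hε, fun n => ?_⟩
        have h2 : ‖((‖c‖ * (1 + ‖μ‖) / 2 : ℝ) : ℂ)‖ = ‖c‖ * (1 + ‖μ‖) / 2 := by
          rw [Complex.norm_real]
          refine abs_of_nonneg ?_
          have : (0:ℝ) ≤ 1 + ‖μ‖ := by positivity
          positivity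
        rw [dist_eq_norm]
        rcases n with _ | m
        · calc ‖c‖ * (‖μ‖ - 1) / 2
              = ‖c‖ * (1 + ‖μ‖) / 2 - ‖c‖ := by ring
            _ ≤ ‖((‖c‖ * (1 + ‖μ‖) / 2 : ℝ) : ℂ)‖ - ‖c * μ ^ 0‖ := by
                rw [h2]; simp
            _ ≤ ‖((‖c‖ * (1 + ‖μ‖) / 2 : ℝ) : ℂ) - c * μ ^ 0‖ := norm_sub_norm_le _ _
        · have hpow : ‖μ‖ ≤ ‖μ‖ ^ (m + 1) := le_self_pow₀ hμ.le (Nat.succ_ne_zero m)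
          have h3 : ‖c‖ * ‖μ‖ ≤ ‖c * μ ^ (m + 1)‖ := by
            rw [norm_mul, norm_pow]
            gcongr
          calc ‖c‖ * (‖μ‖ - 1) / 2
              = ‖c‖ * ‖μ‖ - ‖c‖ * (1 + ‖μ‖) / 2 := by ring
            _ ≤ ‖c * μ ^ (m + 1)‖ - ‖((‖c‖ * (1 + ‖μ‖) / 2 : ℝ) : ℂ)‖ := by
                rw [h2]; linarith
            _ ≤ ‖c * μ ^ (m + 1) - ((‖c‖ * (1 + ‖μ‖) / 2 : ℝ) : ℂ)‖ := norm_sub_norm_le _ _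
            _ = ‖((‖c‖ * (1 + ‖μ‖) / 2 : ℝ) : ℂ) - c * μ ^ (m + 1)‖ := norm_sub_rev _ _
  obtain ⟨w, ε, hε, hbd⟩ := key
  refine ⟨w, fun hmem => ?_⟩
  rw [Metric.mem_closure_iff] at hmem
  obtain ⟨x, hx, hlt⟩ := hmem ε hε
  obtain ⟨n, rfl⟩ := hx
  exact absurd hlt (not_lt.2 (hbd n))

/-- A diagonalizable operator on a complex Hilbert space of dimension
greater than 1 is not weakly l-sequentially supercyclic. -/
theorem diagonalizable_not_weaklyLSeqSupercyclic [CompleteSpace H]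
    (hdim : 1 < Module.rank ℂ H) (T : H →L[ℂ] H) (hT : Diagonalizable T) :
    ¬ ∃ y : H, weakLimitSet (projOrbit T y) = Set.univ := by
  classical
  rintro ⟨y, hy⟩
  obtain ⟨ι, b, d, hd⟩ := hT
  -- there are two distinct indices
  have hexij : ∃ i j : ι, i ≠ j := by
    by_contra hcon
    push_neg at hcon
    have hss : (Set.range b).Subsingleton := by
      rintro x ⟨i, rfl⟩ z ⟨j, rfl⟩
      rw [hcon i j]
    have hfin : (Set.range b).Finite := hss.finite
    haveI : FiniteDimensional ℂ (Submodule.span ℂ (Set.range b)) :=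
      FiniteDimensional.span_of_finite ℂ hfin
    have hclosed : IsClosed ((Submodule.span ℂ (Set.range b)) : Set H) :=
      Submodule.closed_of_finiteDimensional _
    have htop : Submodule.span ℂ (Set.range b) = ⊤ := by
      rw [← hclosed.submodule_topologicalClosure_eq]
      exact b.dense_span
    have h1 : Module.rank ℂ H ≤ Cardinal.mk (Set.range b) := by
      have := rank_span_le (R := ℂ) (Set.range b)
      rwa [htop, rank_top] at this
    have h2 : Cardinal.mk (Set.range b) ≤ 1 := hss.cardinalMk_le_one
    exact absurd (h1.trans h2) (not_le.2 hdim)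
  obtain ⟨i, j, hij⟩ := hexij
  have horth := b.orthonormal
  rw [orthonormal_iff_ite] at horth
  -- eigenvalue action on inner products
  have key : ∀ (l : ι) (z : H), inner ℂ (b l) (T z) = d l * (inner ℂ (b l) z : ℂ) := by
    intro l z
    have h1 := (b.hasSum_repr z).mapL T
    simp only [map_smul, hd] at h1
    have h2 := h1.mapL (innerSL ℂ (b l))
    have h3 : (fun k => (innerSL ℂ (b l)) (b.repr z k • d k • b k)) =
        fun k => if k = l then d l * (inner ℂ (b l) z : ℂ) else 0 := by
      funext k
      by_cases hk : k = l
      · subst hk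
        simp [inner_smul_right, horth, b.repr_apply_apply]
        simp [b.orthonormal.1 k, mul_comm]
      · simp [inner_smul_right, horth, hk, Ne.symm hk]
    rw [h3] at h2
    exact h2.unique (hasSum_ite_eq l _)
  have keyn : ∀ (l : ι) (n : ℕ),
      (inner ℂ (b l) ((T ^ n) y) : ℂ) = d l ^ n * inner ℂ (b l) y := by
    intro l n
    induction n with
    | zero => simp
    | succ m ih =>
      rw [pow_succ' T m, ContinuousLinearMap.mul_apply, key, ih, pow_succ']
      ring
  set A : ℂ := inner ℂ (b i) y with hA
  set C : ℂ := inner ℂ (b j) y with hC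
  obtain ⟨w, hw⟩ := exists_not_mem_closure_geom (C / A) (d j / d i)
  -- the target vector
  set z₀ : H := b i + w • b j with hz₀
  have hz₀mem : z₀ ∈ weakLimitSet (projOrbit T y) := hy ▸ Set.mem_univ z₀
  obtain ⟨u, hu, hconv⟩ := hz₀mem
  choose α ν hαν using hu
  have hii : (inner ℂ (b i) (b i) : ℂ) = 1 := by simp [horth, b.orthonormal.1]
  have hjj : (inner ℂ (b j) (b j) : ℂ) = 1 := by simp [horth, b.orthonormal.1]
  have hij' : (inner ℂ (b i) (b j) : ℂ) = 0 := by simp [horth, hij]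
  have hji : (inner ℂ (b j) (b i) : ℂ) = 0 := by simp [horth, Ne.symm hij]
  have hzi : (inner ℂ (b i) z₀ : ℂ) = 1 := by
    rw [hz₀, inner_add_right, inner_smul_right, hii, hij']; ring
  have hzj : (inner ℂ (b j) z₀ : ℂ) = w := by
    rw [hz₀, inner_add_right, inner_smul_right, hjj, hji]; ring
  have hui : ∀ k, (inner ℂ (b i) (u k) : ℂ) = α k * (d i ^ ν k * A) := by
    intro k
    rw [hαν k, inner_smul_right, keyn]
  have huj : ∀ k, (inner ℂ (b j) (u k) : ℂ) = α k * (d j ^ ν k * C) := by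
    intro k
    rw [hαν k, inner_smul_right, keyn]
  have ht : Tendsto (fun k => α k * (d i ^ ν k * A)) atTop (𝓝 1) := by
    have := hconv (innerSL ℂ (b i))
    simpa [hui, hzi] using this
  have hs : Tendsto (fun k => α k * (d j ^ ν k * C)) atTop (𝓝 w) := by
    have := hconv (innerSL ℂ (b j))
    simpa [huj, hzj] using this
  have hne : ∀ᶠ k in atTop, α k * (d i ^ ν k * A) ≠ 0 := ht.eventually_ne one_ne_zero
  have hdiv : Tendsto
      (fun k => α k * (d j ^ ν k * C) / (α k * (d i ^ ν k * A))) atTop (𝓝 w) := by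
    have := hs.div ht one_ne_zero
    rw [div_one] at this
    exact this
  have hin : ∀ᶠ k in atTop, α k * (d j ^ ν k * C) / (α k * (d i ^ ν k * A)) ∈
      Set.range fun n : ℕ => (C / A) * (d j / d i) ^ n := by
    filter_upwards [hne] with k hk
    refine ⟨ν k, ?_⟩
    show C / A * (d j / d i) ^ ν k = _
    have hα : α k ≠ 0 := fun h => hk (by simp [h])
    have hp : d i ^ ν k ≠ 0 := fun h => hk (by simp [h])
    have hA0 : A ≠ 0 := fun h => hk (by simp [h])
    rw [div_pow]
    field_simp
  exact hw (mem_closure_of_tendsto hdiv hin)
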